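/- arXiv:1301.4121 — 2 statements merged into one kernel-verified Lean document; each statement's English description precedes it below -/
import Mathlib

section
/- Let n ≥ 3 and let 𝔉 = (𝓕_1, …, 𝓕_l) be any finite family of finite sequences of simple graphs, each graph in each sequence having fewer than n vertices. Let M be the real matrix with rows indexed by the sequences in 𝔉 and columns indexed by the isomorphism classes of n-vertex simple graphs, whose (𝓕, [H]) entry is the covering number c(𝓕, H). Then d(n) ≥ rank_ℝ(M), where d(n) is the number of equivalence classes of n-vertex simple graphs under the reconstruction relation ∼ (equivalently, the number of distinct decks of n-vertex graphs). -/
/-!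
For a sequence `L = (F₁, …, F_m)` and a graph `G`, sorting the `m`-tuples of subgraphs of `G`
isomorphic to `F₁, …, F_m` by their union gives Kocay's identity
`∏ᵢ s(Fᵢ, G) = ∑_K c(L, K)`, the sum running over all subgraphs `K` of `G`. By Kelly's lemma
every isomorphism-invariant sum over the `j`-vertex subgraphs of `G` with `j < n` is determined by
the deck of `G`; this applies to each `s(Fᵢ, G)` and to the part of Kocay's sum with `|K| < n`.
Hence the spanning part `∑_{G' ≤ G} c(L, G')` is reconstructible, so over the sequences of `𝔉`
these vectors take at most `d(n)` values. Möbius inversion over the finite order `G' ≤ G` puts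
every column `(c(L, G))_L` of the matrix into their span.
-/

open SimpleGraph

/-- The vertex-deleted subgraph `G − v`: the induced subgraph of `G` obtained by
deleting `v` and all edges incident with `v`. -/
abbrev vdel {n : ℕ} (G : SimpleGraph (Fin n)) (v : Fin n) :
    SimpleGraph ({v}ᶜ : Set (Fin n)) :=
  G.induce {v}ᶜ

/-- `H` is a reconstruction of `G`: there is a bijection `f` between the vertex
sets such that `G − v ≅ H − f v` for every vertex `v`. -/
def IsReconstruction {n : ℕ} (G H : SimpleGraph (Fin n)) : Prop :=
  ∃ f : Fin n ≃ Fin n, ∀ v : Fin n, Nonempty (vdel G v ≃g vdel H (f v))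

/-- `s(F,G)`: the number of subgraphs of `G` isomorphic to `F`. -/
noncomputable def subCount {k n : ℕ} (F : SimpleGraph (Fin k))
    (G : SimpleGraph (Fin n)) : ℕ :=
  Nat.card {H : G.Subgraph // Nonempty (F ≃g H.coe)}

/-- A finite sequence of simple graphs (on arbitrary finite vertex sets). -/
abbrev GSeq : Type := List (Σ k : ℕ, SimpleGraph (Fin k))

/-- `c(𝓕,G)`: the number of covers of `G` by the sequence `L`, i.e. of sequences
of subgraphs of `G`, the `i`-th being isomorphic to the `i`-th graph of `L`,
whose union (of both vertex sets and edge sets) is all of `G`. -/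
noncomputable def coverCount {n : ℕ} (L : GSeq) (G : SimpleGraph (Fin n)) : ℕ :=
  Nat.card {C : Fin L.length → G.Subgraph //
    (∀ i, Nonempty ((L.get i).2 ≃g (C i).coe)) ∧ (⨆ i, C i) = ⊤}

/-- `R` is a transversal of the isomorphism classes of graphs in `C`:
it contains exactly one representative of each isomorphism class in `C`. -/
def IsIsoTransversal {n : ℕ} (C : Set (SimpleGraph (Fin n)))
    (R : Finset (SimpleGraph (Fin n))) : Prop :=
  ↑R ⊆ C ∧ ∀ G ∈ C, ∃! H, H ∈ R ∧ Nonempty (G ≃g H)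

/-- `D` is a transversal of the reconstruction classes of graphs in `C`:
it contains exactly one representative of each `∼`-equivalence class in `C`. -/
def IsReconTransversal {n : ℕ} (C : Set (SimpleGraph (Fin n)))
    (D : Finset (SimpleGraph (Fin n))) : Prop :=
  ↑D ⊆ C ∧ ∀ G ∈ C, ∃! H, H ∈ D ∧ IsReconstruction G H

theorem mem_of_forall_sum_le_mem {α M S : Type*} [PartialOrder α] [Fintype α] [DecidableLE α]
    [AddCommGroup M] [SetLike S M] [AddSubgroupClass S M] {W : S} {f : α → M}
    (h : ∀ x, ∑ y with y ≤ x, f y ∈ W) (x : α) : f x ∈ W := by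
  classical
  induction x using WellFoundedLT.induction with
  | _ x ih =>
    have hsplit : ∑ y with y ≤ x, f y = f x + ∑ y with y < x, f y := by
      rw [← Finset.sum_insert (by simp)]
      congr 1
      ext y
      simp [le_iff_lt_or_eq, or_comm]
    have hx : f x + ∑ y with y < x, f y ∈ W := hsplit ▸ h x
    have hlt : ∑ y with y < x, f y ∈ W := sum_mem fun y hy => ih y (Finset.mem_filter.1 hy).2
    simpa using sub_mem hx hlt

namespace SimpleGraph

section Covers

variable {V W : Type*} {A : SimpleGraph V} {B : SimpleGraph W}

namespace Subgraph

theorem comap_map_of_injective {f : A →g B} (hf : Function.Injective f) (H : A.Subgraph) :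
    (H.map f).comap f = H := by
  ext u v
  · simp [hf.mem_set_image]
  · simp only [comap_adj, map_adj, Relation.map_apply, hf.eq_iff, exists_eq_right_right,
      exists_eq_right]
    exact ⟨And.right, fun h => ⟨H.adj_sub h, h⟩⟩

theorem map_comap_of_le {f : A →g B} {K : B.Subgraph} (hK : K ≤ Subgraph.map f ⊤) :
    (K.comap f).map f = K := by
  ext x y
  · simp only [map_verts, comap_verts, Set.mem_image, Set.mem_preimage]
    constructor
    · rintro ⟨u, hu, rfl⟩
      exact hu
    · intro hx
      obtain ⟨u, -, rfl⟩ := hK.1 hx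
      exact ⟨u, hx, rfl⟩
  · simp only [map_adj, comap_adj, Relation.Map]
    constructor
    · rintro ⟨u, v, ⟨-, h⟩, rfl, rfl⟩
      exact h
    · intro h
      obtain ⟨u, v, huv, rfl, rfl⟩ := hK.2 h
      exact ⟨u, v, ⟨huv, h⟩, rfl, rfl⟩

theorem map_iSup {ι : Sort*} (f : A →g B) (C : ι → A.Subgraph) :
    (⨆ i, C i).map f = ⨆ i, (C i).map f :=
  GaloisConnection.l_iSup fun H K => map_le_iff_le_comap f H K

noncomputable instance fintypeOfFinite [Finite V] : Fintype A.Subgraph :=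
  Fintype.ofFinite _

end Subgraph

def IsCopyTuple (L : GSeq) (C : Fin L.length → A.Subgraph) : Prop :=
  ∀ i, Nonempty ((L.get i).2 ≃g (C i).coe)

noncomputable def coverNumber (L : GSeq) (A : SimpleGraph V) : ℕ :=
  Nat.card {C : Fin L.length → A.Subgraph // IsCopyTuple L C ∧ ⨆ i, C i = ⊤}

namespace Copy

noncomputable def subgraphEquiv (f : Copy A B) :
    A.Subgraph ≃ {K : B.Subgraph // K ≤ f.toSubgraph} where
  toFun H := ⟨H.map f.toHom, Subgraph.map_mono le_top⟩
  invFun K := K.1.comap f.toHom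
  left_inv H := Subgraph.comap_map_of_injective f.injective H
  right_inv K := Subtype.ext (Subgraph.map_comap_of_le K.2)

theorem isCopyTuple_map (f : Copy A B) {L : GSeq} {C : Fin L.length → A.Subgraph}
    (hC : IsCopyTuple L C) : IsCopyTuple L fun i => (C i).map f.toHom :=
  fun i => (hC i).map fun e => e.trans (f.isoSubgraphMap (C i))

noncomputable def coverEquiv (f : Copy A B) (L : GSeq) :
    {C : Fin L.length → A.Subgraph // IsCopyTuple L C ∧ ⨆ i, C i = ⊤} ≃
      {C : Fin L.length → B.Subgraph // IsCopyTuple L C ∧ ⨆ i, C i = f.toSubgraph} where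
  toFun C := ⟨fun i => (C.1 i).map f.toHom, f.isCopyTuple_map C.2.1, by
    rw [← Subgraph.map_iSup, C.2.2]⟩
  invFun C :=
    have hle (i) : C.1 i ≤ f.toSubgraph := (le_iSup (fun j => C.1 j) i).trans_eq C.2.2
    ⟨fun i => (C.1 i).comap f.toHom,
      fun i => by
        obtain ⟨e⟩ := C.2.1 i
        rw [← Subgraph.map_comap_of_le (hle i)] at e
        exact ⟨e.trans (f.isoSubgraphMap _).symm⟩,
      f.subgraphEquiv.injective <| Subtype.ext <| by
        simp only [subgraphEquiv, Equiv.coe_fn_mk, Subgraph.map_iSup,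
          Subgraph.map_comap_of_le (hle _), C.2.2]⟩
  left_inv C := Subtype.ext <| funext fun i => Subgraph.comap_map_of_injective f.injective _
  right_inv C := Subtype.ext <| funext fun i =>
    Subgraph.map_comap_of_le ((le_iSup (fun j => C.1 j) i).trans_eq C.2.2)

end Copy

theorem coverNumber_congr (e : A ≃g B) (L : GSeq) : coverNumber L A = coverNumber L B := by
  refine Nat.card_congr ((e.toCopy.coverEquiv L).trans (Equiv.subtypeEquivRight fun C => ?_))
  rw [Copy.toSubgraph, show e.toCopy.toHom = e.toHom from rfl, Subgraph.map_iso_top]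

theorem card_isCopyTuple_iSup_eq (L : GSeq) (K : A.Subgraph) :
    Nat.card {C : Fin L.length → A.Subgraph // IsCopyTuple L C ∧ ⨆ i, C i = K} =
      coverNumber L K.coe := by
  refine (Nat.card_congr ((K.coeCopy.coverEquiv L).trans
    (Equiv.subtypeEquivRight fun C => ?_))).symm
  rw [Copy.toSubgraph, show K.coeCopy.toHom = K.hom from rfl, Subgraph.map_hom_top]

theorem card_isCopyTuple_eq_prod (L : GSeq) (A : SimpleGraph V) :
    Nat.card {C : Fin L.length → A.Subgraph // IsCopyTuple L C} =
      ∏ i, Nat.card {H : A.Subgraph // Nonempty ((L.get i).2 ≃g H.coe)} := by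
  rw [← Nat.card_pi]
  exact Nat.card_congr
    (Equiv.subtypePiEquivPi (p := fun i (H : A.Subgraph) => Nonempty ((L.get i).2 ≃g H.coe)))

/-- Kocay's lemma: sort the tuples of copies by their union. -/
theorem card_isCopyTuple_eq_sum_coverNumber [Finite V] (L : GSeq) (A : SimpleGraph V) :
    Nat.card {C : Fin L.length → A.Subgraph // IsCopyTuple L C} =
      ∑ K : A.Subgraph, coverNumber L K.coe := by
  simp_rw [← card_isCopyTuple_iSup_eq, ← Nat.card_sigma]
  exact Nat.card_congr
    ((Equiv.sigmaFiberEquiv fun C : {C // IsCopyTuple L C} => ⨆ i, C.1 i).symm.trans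
      (Equiv.sigmaCongrRight fun K =>
        Equiv.subtypeSubtypeEquivSubtypeInter (IsCopyTuple L) (fun C => ⨆ i, C i = K)))

end Covers

section SubgraphSum

def IsIsoInvariant (g : ∀ {W : Type}, SimpleGraph W → ℕ) : Prop :=
  ∀ {W W' : Type} {A : SimpleGraph W} {B : SimpleGraph W'}, A ≃g B → g A = g B

noncomputable def subgraphSum (g : ∀ {W : Type}, SimpleGraph W → ℕ) (j : ℕ) {V : Type}
    [Finite V] (A : SimpleGraph V) : ℕ :=
  ∑ K : A.Subgraph, if Nat.card K.verts = j then g K.coe else 0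

variable {g : ∀ {W : Type}, SimpleGraph W → ℕ} {V W : Type} {A : SimpleGraph V}
  {B : SimpleGraph W}

theorem isIsoInvariant_coverNumber (L : GSeq) : IsIsoInvariant (coverNumber L) :=
  fun e => coverNumber_congr e L

theorem IsIsoInvariant.ite_card_eq (hg : IsIsoInvariant g) {K : A.Subgraph} {K' : B.Subgraph}
    (e : K.coe ≃g K'.coe) (j : ℕ) :
    (if Nat.card K.verts = j then g K.coe else 0) =
      if Nat.card K'.verts = j then g K'.coe else 0 := by
  rw [Nat.card_congr e.toEquiv, show g K.coe = g K'.coe from hg e]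

open scoped Classical in
theorem subgraphSum_eq_sum_le_toSubgraph [Finite V] [Finite W] (hg : IsIsoInvariant g)
    (j : ℕ) (f : Copy A B) :
    subgraphSum g j A =
      ∑ K : B.Subgraph, if K ≤ f.toSubgraph ∧ Nat.card K.verts = j then g K.coe else 0 := by
  simp_rw [ite_and]
  rw [← Finset.sum_filter, Finset.sum_subtype _ fun K => Finset.mem_filter_univ K, subgraphSum]
  exact Fintype.sum_equiv f.subgraphEquiv _ _ fun H => hg.ite_card_eq (f.isoSubgraphMap H) j

theorem subgraphSum_congr [Finite V] [Finite W] (hg : IsIsoInvariant g) (j : ℕ) (e : A ≃g B) :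
    subgraphSum g j A = subgraphSum g j B := by
  rw [subgraphSum_eq_sum_le_toSubgraph hg j e.toCopy, Copy.toSubgraph,
    show e.toCopy.toHom = e.toHom from rfl, Subgraph.map_iso_top]
  simp only [le_top, true_and, subgraphSum]

theorem le_toSubgraph_induce_iff {s : Set V} {K : A.Subgraph} :
    K ≤ (Copy.induce A s).toSubgraph ↔ K.verts ⊆ s := by
  constructor
  · intro h v hv
    obtain ⟨u, -, rfl⟩ := h.1 hv
    exact u.2
  · intro h
    refine ⟨fun v hv => ⟨⟨v, h hv⟩, trivial, rfl⟩, fun u v huv => ?_⟩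
    exact ⟨⟨u, h (K.edge_vert huv)⟩, ⟨v, h (K.edge_vert huv.symm)⟩, K.adj_sub huv, rfl,
      rfl⟩

open scoped Classical in
theorem subgraphSum_induce [Finite V] (hg : IsIsoInvariant g) (j : ℕ) (s : Set V) :
    subgraphSum g j (A.induce s) =
      ∑ K : A.Subgraph, if K.verts ⊆ s ∧ Nat.card K.verts = j then g K.coe else 0 := by
  simp_rw [subgraphSum_eq_sum_le_toSubgraph hg j (Copy.induce A s), le_toSubgraph_induce_iff]

/-- Kelly's lemma: a `j`-vertex subgraph survives the deletion of exactly `|V| - j` vertices. -/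
theorem sum_subgraphSum_induce_compl [Fintype V] (hg : IsIsoInvariant g) (j : ℕ)
    (G : SimpleGraph V) :
    ∑ v, subgraphSum g j (G.induce {v}ᶜ) = (Fintype.card V - j) * subgraphSum g j G := by
  classical
  simp_rw [subgraphSum_induce hg, subgraphSum, Finset.mul_sum]
  rw [Finset.sum_comm]
  refine Finset.sum_congr rfl fun K _ => ?_
  by_cases hK : Nat.card K.verts = j
  · have hv (v : V) : (K.verts ⊆ {v}ᶜ ∧ Nat.card K.verts = j) ↔ v ∈ K.vertsᶜ := by
      rw [Set.subset_compl_singleton_iff]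
      exact and_iff_left hK
    rw [if_pos hK, Finset.sum_congr rfl fun v _ => if_congr (hv v) rfl rfl, Finset.sum_ite,
      Finset.sum_const_zero, add_zero, Finset.sum_const, smul_eq_mul, ← hK, Nat.card_coe_set_eq,
      ← Nat.card_eq_fintype_card, ← Set.ncard_compl, Set.ncard_eq_toFinset_card',
      Set.filter_mem_univ_eq_toFinset]
  · simp only [hK, and_false, if_false, Finset.sum_const_zero, mul_zero]

theorem sum_eq_sum_range_subgraphSum [Fintype V] (g : ∀ {W : Type}, SimpleGraph W → ℕ)
    (A : SimpleGraph V) :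
    ∑ K : A.Subgraph, g K.coe = ∑ j ∈ Finset.range (Fintype.card V + 1), subgraphSum g j A := by
  simp_rw [subgraphSum]
  rw [Finset.sum_comm]
  refine Finset.sum_congr rfl fun K _ => ?_
  rw [Finset.sum_ite_eq, if_pos (Finset.mem_range_succ_iff.2 ?_)]
  rw [← Nat.card_eq_fintype_card, Nat.card_coe_set_eq]
  exact Set.ncard_le_card K.verts

open scoped Classical in
theorem subgraphSum_card_eq_sum_le [Fintype V] [DecidableEq V] (hg : IsIsoInvariant g)
    (G : SimpleGraph V) : subgraphSum g (Fintype.card V) G = ∑ G' with G' ≤ G, g G' := by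
  have hspan (K : G.Subgraph) : Nat.card K.verts = Fintype.card V ↔ K.IsSpanning := by
    rw [Subgraph.isSpanning_iff, Set.eq_univ_iff_ncard, Nat.card_coe_set_eq,
      Nat.card_eq_fintype_card]
  rw [subgraphSum, ← Finset.sum_filter]
  refine Finset.sum_bij' (fun K _ => K.spanningCoe)
    (fun G' hG' => toSubgraph G' (by simpa using hG')) (fun K _ => by simpa using K.spanningCoe_le)
    (fun G' _ => by simp) (fun K hK => ?_) (fun G' _ => rfl) (fun K hK => ?_)
  · have hK := Subgraph.isSpanning_iff.1 ((hspan K).1 (by simpa using hK))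
    ext <;> simp [hK]
  · exact hg (Subgraph.spanningCoeEquivCoeOfSpanning K ((hspan K).1 (by simpa using hK))).symm

end SubgraphSum

section Reconstruction

variable {g : ∀ {W : Type}, SimpleGraph W → ℕ} {n : ℕ}

theorem subgraphSum_eq_of_isReconstruction (hg : IsIsoInvariant g) {j : ℕ} (hj : j < n)
    {G H : SimpleGraph (Fin n)} (h : IsReconstruction G H) :
    subgraphSum g j G = subgraphSum g j H := by
  obtain ⟨f, hf⟩ := h
  have hdeck : ∑ v, subgraphSum g j (vdel G v) = ∑ v, subgraphSum g j (vdel H v) := by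
    rw [← f.sum_comp fun v => subgraphSum g j (vdel H v)]
    exact Finset.sum_congr rfl fun v _ => subgraphSum_congr hg j (hf v).some
  rw [sum_subgraphSum_induce_compl hg, sum_subgraphSum_induce_compl hg, Fintype.card_fin] at hdeck
  exact Nat.eq_of_mul_eq_mul_left (Nat.sub_pos_of_lt hj) hdeck

open scoped Classical in
noncomputable def isoIndicator {k : ℕ} (F : SimpleGraph (Fin k)) :
    ∀ {W : Type}, SimpleGraph W → ℕ :=
  fun A => if Nonempty (F ≃g A) then 1 else 0

theorem isIsoInvariant_isoIndicator {k : ℕ} (F : SimpleGraph (Fin k)) :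
    IsIsoInvariant (isoIndicator F) := fun {_ _ A B} e => by
  have hAB : Nonempty (F ≃g A) ↔ Nonempty (F ≃g B) :=
    ⟨fun ⟨f⟩ => ⟨f.trans e⟩, fun ⟨f⟩ => ⟨f.trans e.symm⟩⟩
  classical
  exact if_congr hAB rfl rfl

theorem subCount_eq_subgraphSum {k : ℕ} (F : SimpleGraph (Fin k)) (G : SimpleGraph (Fin n)) :
    subCount F G = subgraphSum (isoIndicator F) k G := by
  classical
  rw [subCount, Nat.card_eq_fintype_card, Fintype.card_subtype, Finset.card_filter, subgraphSum]
  refine Finset.sum_congr rfl fun K _ => ?_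
  by_cases hF : Nonempty (F ≃g K.coe)
  · have hk : Nat.card K.verts = k := by
      obtain ⟨e⟩ := hF
      rw [← Nat.card_congr e.toEquiv, Nat.card_eq_fintype_card, Fintype.card_fin]
    simp only [isoIndicator, if_pos hF, if_pos hk]
  · simp only [isoIndicator, if_neg hF, ite_self]

theorem subCount_eq_of_isReconstruction {k : ℕ} (hk : k < n) (F : SimpleGraph (Fin k))
    {G H : SimpleGraph (Fin n)} (h : IsReconstruction G H) : subCount F G = subCount F H := by
  rw [subCount_eq_subgraphSum, subCount_eq_subgraphSum]
  exact subgraphSum_eq_of_isReconstruction (isIsoInvariant_isoIndicator F) hk h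

theorem prod_subCount_eq_sum_subgraphSum (L : GSeq) (G : SimpleGraph (Fin n)) :
    ∏ i, subCount (L.get i).2 G =
      ∑ j ∈ Finset.range (n + 1), subgraphSum (coverNumber L) j G := by
  have h := sum_eq_sum_range_subgraphSum (coverNumber L) G
  rw [Fintype.card_fin] at h
  rw [← h, ← card_isCopyTuple_eq_sum_coverNumber, card_isCopyTuple_eq_prod]
  rfl

theorem subgraphSum_coverNumber_eq_of_isReconstruction {L : GSeq} (hL : ∀ F ∈ L, F.1 < n)
    {G H : SimpleGraph (Fin n)} (h : IsReconstruction G H) :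
    subgraphSum (coverNumber L) n G = subgraphSum (coverNumber L) n H := by
  have hprod : ∏ i, subCount (L.get i).2 G = ∏ i, subCount (L.get i).2 H :=
    Finset.prod_congr rfl fun i _ => subCount_eq_of_isReconstruction (hL _ (L.get_mem i)) _ h
  rw [prod_subCount_eq_sum_subgraphSum, prod_subCount_eq_sum_subgraphSum, Finset.sum_range_succ,
    Finset.sum_range_succ, Finset.sum_congr rfl fun j hj => subgraphSum_eq_of_isReconstruction
      (isIsoInvariant_coverNumber L) (Finset.mem_range.1 hj) h] at hprod
  exact Nat.add_left_cancel hprod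

open scoped Classical in
theorem subgraphSum_coverNumber_eq_sum_le (L : GSeq) (G : SimpleGraph (Fin n)) :
    subgraphSum (coverNumber L) n G = ∑ G' with G' ≤ G, coverCount L G' := by
  have h := subgraphSum_card_eq_sum_le (isIsoInvariant_coverNumber L) G
  rw [Fintype.card_fin] at h
  exact h

end Reconstruction

end SimpleGraph

theorem stmt_7_general {n l : ℕ}
    (𝔉 : Fin l → GSeq) (h𝔉 : ∀ i : Fin l, ∀ F ∈ 𝔉 i, F.1 < n)
    (R : Finset (SimpleGraph (Fin n)))
    (D : Finset (SimpleGraph (Fin n)))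
    (hD : IsReconTransversal Set.univ D) :
    (Matrix.of fun (i : Fin l) (H : ↥R) =>
        ((coverCount (𝔉 i) (H : SimpleGraph (Fin n)) : ℝ))).rank ≤ D.card := by
  classical
  let cover (G : SimpleGraph (Fin n)) : Fin l → ℝ := fun i => coverCount (𝔉 i) G
  let spanning (G : SimpleGraph (Fin n)) : Fin l → ℝ :=
    fun i => subgraphSum (coverNumber (𝔉 i)) n G
  let W := Submodule.span ℝ (D.image spanning : Set (Fin l → ℝ))
  have hspanning (G : SimpleGraph (Fin n)) : spanning G ∈ W := by
    obtain ⟨d, ⟨hd, hGd⟩, -⟩ := hD.2 G trivial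
    have hGd : spanning G = spanning d := funext fun i => congrArg (Nat.cast : ℕ → ℝ)
      (subgraphSum_coverNumber_eq_of_isReconstruction (h𝔉 i) hGd)
    exact hGd ▸ Submodule.subset_span (Finset.mem_coe.2 (Finset.mem_image_of_mem _ hd))
  have hcover : ∀ G, cover G ∈ W := mem_of_forall_sum_le_mem fun G => by
    convert hspanning G using 1
    funext i
    simp [cover, spanning, subgraphSum_coverNumber_eq_sum_le]
  rw [Matrix.rank_eq_finrank_span_cols]
  refine (Submodule.finrank_mono (t := W) ?_).trans
    ((finrank_span_finset_le_card (D.image spanning)).trans Finset.card_image_le)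
  exact Submodule.span_le.2 (Set.range_subset_iff.2 fun H => hcover H)

/-- Let `n ≥ 3` and let `𝔉 = (L_1, …, L_l)` be any finite family of sequences of
graphs, each graph having fewer than `n` vertices. Let `M` be the matrix of
covering numbers `c(L_i, H)`, with rows indexed by `Fin l` and columns indexed
by the isomorphism classes of `n`-vertex graphs (a transversal `R` of all
`n`-vertex graphs). Then `d(n) ≥ rank_ℝ(M)`, where `d(n) = D.card` for any
transversal `D` of the reconstruction classes of `n`-vertex graphs. -/
theorem stmt_7 {n l : ℕ} (hn : 3 ≤ n)
    (𝔉 : Fin l → GSeq) (h𝔉 : ∀ i : Fin l, ∀ F ∈ 𝔉 i, F.1 < n)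
    (R : Finset (SimpleGraph (Fin n)))
    (hR : IsIsoTransversal Set.univ R)
    (D : Finset (SimpleGraph (Fin n)))
    (hD : IsReconTransversal Set.univ D) :
    (Matrix.of fun (i : Fin l) (H : ↥R) =>
        ((coverCount (𝔉 i) (H : SimpleGraph (Fin n)) : ℝ))).rank ≤ D.card :=
  stmt_7_general 𝔉 h𝔉 R D hD
end

section
/- Let n ≥ 2 and let 𝓕 = (F_1, …, F_ℓ) be a finite sequence of simple graphs, each with exactly n − 1 vertices. Then there exist a finite set S of finite sequences of simple graphs, each graph in each sequence having exactly n − 1 vertices, and real coefficients β : S → ℝ, such that for every n-vertex simple graph G, c*(𝓕, G) = Σ_{𝓕' ∈ S} β(𝓕') · c(𝓕', G). That is, the function G ↦ c*(𝓕, G) on n-vertex graphs is a fixed real linear combination of the covering-number functions G ↦ c(𝓕', G). -/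
open SimpleGraph

/-- `c*(𝓕,G)`: the number of non-overlapping covers of `G` by the sequence `L`,
i.e. covers whose members have pairwise distinct vertex sets. -/
noncomputable def coverCountNO {n : ℕ} (L : GSeq) (G : SimpleGraph (Fin n)) : ℕ :=
  Nat.card {C : Fin L.length → G.Subgraph //
    (∀ i, Nonempty ((L.get i).2 ≃g (C i).coe)) ∧ (⨆ i, C i) = ⊤ ∧
    Function.Injective fun i => (C i).verts}

/-!
Write `c_S(F, G)` for the number of covers of `G` by the family `F` whose members indexed by `S`
have pairwise distinct vertex sets, so that `c_∅ = c` and `c_univ = c*`. Enlarging `S` by an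
index `a` discards exactly the covers in which the member at `a` has the vertex set of the member
at some, necessarily unique, `j ∈ S`. Such a cover is the same thing as a cover by the family in
which `F_j` and `F_a` are replaced by a single graph `W` on `n - 1` vertices (their union),
together with a splitting of that member into copies of `F_j` and `F_a` on a common vertex set;
the number of splittings depends only on the isomorphism type of `W`. Hence
`c_{S ∪ {a}}(F, ·) = c_S(F, ·) - ∑_{j ∈ S} ∑_{[W]} s_{j,a}(W) · c_S(F_{j,a,W}, ·)`, where
`F_{j,a,W}` is one graph shorter, and induction on the length of `F` and on `|S|` exhibits
`c*(F, ·)` as a linear combination of the functions `c(F', ·)`.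
-/

def mergeIndex {ι β : Type*} [DecidableEq ι] (f : ι → β) (j a : ι) (x : β) :
    {i // i ≠ a} → β :=
  fun i => if i.1 = j then x else f i

def unmergeIndex {ι β : Type*} [DecidableEq ι] {a : ι} (g : {i // i ≠ a} → β) (j : ι)
    (x y : β) : ι → β :=
  fun i => if h : i = a then y else if i = j then x else g ⟨i, h⟩

section MergeIndex

variable {ι β : Type*} [DecidableEq ι] {j a : ι}

lemma mergeIndex_apply_of_eq {f : ι → β} {x : β} {i : {i // i ≠ a}} (h : i.1 = j) :
    mergeIndex f j a x i = x :=
  if_pos h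

lemma mergeIndex_self (hja : j ≠ a) (f : ι → β) (x : β) : mergeIndex f j a x ⟨j, hja⟩ = x :=
  if_pos rfl

lemma mergeIndex_apply_of_ne {f : ι → β} {x : β} {i : {i // i ≠ a}} (h : i.1 ≠ j) :
    mergeIndex f j a x i = f i :=
  if_neg h

lemma unmergeIndex_apply_left (hja : j ≠ a) (g : {i // i ≠ a} → β) (x y : β) :
    unmergeIndex g j x y j = x := by
  simp [unmergeIndex, hja]

lemma unmergeIndex_apply_right (g : {i // i ≠ a} → β) (x y : β) :
    unmergeIndex g j x y a = y := by
  simp [unmergeIndex]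

lemma unmergeIndex_mergeIndex (hja : j ≠ a) (f : ι → β) (x : β) :
    unmergeIndex (mergeIndex f j a x) j (f j) (f a) = f := by
  funext i
  by_cases hia : i = a
  · simp [unmergeIndex, hia]
  · by_cases hij : i = j <;> simp [unmergeIndex, mergeIndex, hia, hij, hja]

lemma mergeIndex_unmergeIndex (hja : j ≠ a) (g : {i // i ≠ a} → β) (x y : β) :
    mergeIndex (unmergeIndex g j x y) j a (g ⟨j, hja⟩) = g := by
  funext ⟨i, hia⟩
  by_cases hij : i = j
  · subst hij; simp [mergeIndex]
  · simp [mergeIndex, unmergeIndex, hia, hij]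

lemma iSup_mergeIndex [CompleteLattice β] (hja : j ≠ a) (f : ι → β) :
    ⨆ i, mergeIndex f j a (f j ⊔ f a) i = ⨆ i, f i := by
  refine le_antisymm (iSup_le fun i => ?_) (iSup_le fun i => ?_)
  · unfold mergeIndex
    split_ifs
    · exact sup_le (le_iSup f j) (le_iSup f a)
    · exact le_iSup f i
  · have hj : f j ⊔ f a ≤ ⨆ i, mergeIndex f j a (f j ⊔ f a) i :=
      (mergeIndex_self hja f _).symm.le.trans (le_iSup_of_le (⟨j, hja⟩ : {i // i ≠ a}) le_rfl)
    by_cases hia : i = a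
    · rw [hia]; exact le_sup_right.trans hj
    by_cases hij : i = j
    · rw [hij]; exact le_sup_left.trans hj
    · exact le_iSup_of_le (⟨i, hia⟩ : {i // i ≠ a}) (by simp [mergeIndex, hij])

end MergeIndex

namespace SimpleGraph

section Splittings

variable {V W α β : Type*} {G : SimpleGraph V} {X : SimpleGraph W}

namespace Subgraph

lemma comap_map_of_injective_s16 (f : X →g G) (hf : Function.Injective f) (A : X.Subgraph) :
    (A.map f).comap f = A := by
  ext u v
  · simp [hf.mem_set_image]
  · simp only [comap_adj, map_adj, Relation.map_apply, hf.eq_iff, exists_eq_right_right,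
      exists_eq_right, and_iff_right_iff_imp]
    exact fun h => h.adj_sub

lemma map_comap_of_le_s16 (f : X →g G) {A : G.Subgraph} (hA : A ≤ (⊤ : X.Subgraph).map f) :
    (A.comap f).map f = A := by
  ext x y
  · rw [map_verts, comap_verts, Set.image_preimage_eq_of_subset]
    simpa using hA.1
  · simp only [map_adj, comap_adj, Relation.map_apply]
    refine ⟨fun ⟨u, v, ⟨_, h⟩, hu, hv⟩ => hu ▸ hv ▸ h, fun h => ?_⟩
    obtain ⟨u, v, huv, rfl, rfl⟩ := hA.2 h
    exact ⟨u, v, ⟨huv, h⟩, rfl, rfl⟩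

def splittings (F₁ : SimpleGraph α) (F₂ : SimpleGraph β) (H : G.Subgraph) :
    Set (G.Subgraph × G.Subgraph) :=
  {p | p.1 ⊔ p.2 = H ∧ p.1.verts = p.2.verts ∧ Nonempty (F₁ ≃g p.1.coe) ∧
    Nonempty (F₂ ≃g p.2.coe)}

end Subgraph

open Subgraph in
lemma Copy.image_splittings_top (f : Copy X G) (F₁ : SimpleGraph α) (F₂ : SimpleGraph β) :
    Prod.map (Subgraph.map f.toHom) (Subgraph.map f.toHom) '' (⊤ : X.Subgraph).splittings F₁ F₂ =
      f.toSubgraph.splittings F₁ F₂ := by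
  ext ⟨A, B⟩
  constructor
  · rintro ⟨⟨A, B⟩, ⟨hAB, hv, ⟨e₁⟩, ⟨e₂⟩⟩, h⟩
    simp only [Prod.map, Prod.mk.injEq] at h hAB hv
    obtain ⟨rfl, rfl⟩ := h
    exact ⟨by rw [← Subgraph.map_sup, hAB], by simp only [map_verts, hv],
      ⟨e₁.trans (f.isoSubgraphMap A)⟩, ⟨e₂.trans (f.isoSubgraphMap B)⟩⟩
  · rintro ⟨hAB, hv, ⟨e₁⟩, ⟨e₂⟩⟩
    dsimp only at hAB hv e₁ e₂
    have hA := map_comap_of_le_s16 f.toHom (hAB ▸ le_sup_left : A ≤ f.toSubgraph)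
    have hB := map_comap_of_le_s16 f.toHom (hAB ▸ le_sup_right : B ≤ f.toSubgraph)
    rw [← hA] at e₁
    rw [← hB] at e₂
    refine ⟨⟨A.comap f.toHom, B.comap f.toHom⟩, ⟨?_, by simp only [comap_verts, hv],
      ⟨e₁.trans (f.isoSubgraphMap _).symm⟩, ⟨e₂.trans (f.isoSubgraphMap _).symm⟩⟩,
      by simp only [Prod.map, hA, hB]⟩
    apply Function.LeftInverse.injective (comap_map_of_injective_s16 f.toHom f.injective)
    rw [Subgraph.map_sup, hA, hB, hAB]

lemma Subgraph.card_splittings_eq (H : G.Subgraph) (e : X ≃g H.coe) (F₁ : SimpleGraph α)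
    (F₂ : SimpleGraph β) :
    Nat.card (H.splittings F₁ F₂) = Nat.card ((⊤ : X.Subgraph).splittings F₁ F₂) := by
  let f : Copy X G := H.coeCopy.comp e.toCopy
  have hf : f.toSubgraph = H := by
    change Subgraph.map (H.hom.comp e.toHom) ⊤ = H
    rw [Subgraph.map_comp, Subgraph.map_iso_top, Subgraph.map_hom_top]
  have hinj := Function.LeftInverse.injective (Subgraph.comap_map_of_injective_s16 f.toHom f.injective)
  rw [← hf, ← f.image_splittings_top, Nat.card_image_of_injective (hinj.prodMap hinj)]

end Splittings

section Covers

variable {V α ι : Type*} {G : SimpleGraph V}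

def IsCover (F : ι → SimpleGraph α) (C : ι → G.Subgraph) : Prop :=
  (∀ i, Nonempty (F i ≃g (C i).coe)) ∧ ⨆ i, C i = ⊤

def injCovers (F : ι → SimpleGraph α) (S : Set ι) (G : SimpleGraph V) : Set (ι → G.Subgraph) :=
  {C | IsCover F C ∧ S.InjOn fun i => (C i).verts}

lemma card_injCovers_empty_congr {κ β : Type*} (e : κ ≃ ι) {F : ι → SimpleGraph α}
    {F' : κ → SimpleGraph β} (h : ∀ i, Nonempty (F' i ≃g F (e i))) (G : SimpleGraph V) :
    Nat.card (injCovers F' ∅ G) = Nat.card (injCovers F ∅ G) := by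
  refine (Nat.card_congr (Equiv.subtypeEquiv (e.symm.arrowCongr (Equiv.refl _)) fun C => ?_)).symm
  simp only [injCovers, IsCover, Set.mem_ofPred_eq, Set.injOn_empty, and_true,
    Equiv.arrowCongr_apply, Equiv.coe_refl, Equiv.symm_symm, Function.comp_apply, id]
  rw [e.iSup_comp (g := C), ← e.forall_congr_right]
  refine and_congr_left' (forall_congr' fun i => ?_)
  obtain ⟨f⟩ := h i
  exact ⟨fun ⟨g⟩ => ⟨f.trans g⟩, fun ⟨g⟩ => ⟨f.symm.trans g⟩⟩

lemma card_injCovers_eq_add_sum [Finite V] [Fintype ι] [DecidableEq ι] (F : ι → SimpleGraph α)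
    {S : Finset ι} {a : ι} (ha : a ∉ S) (G : SimpleGraph V) :
    Nat.card (injCovers F S G) = Nat.card (injCovers F (insert a S) G) +
      ∑ j ∈ S, Nat.card {C ∈ injCovers F S G | (C a).verts = (C j).verts} := by
  classical
  have : Fintype V := Fintype.ofFinite V
  have ha' : a ∉ (S : Set ι) := ha
  simp only [Nat.card_eq_card_toFinset]
  rw [← Finset.card_biUnion, ← Finset.card_union_of_disjoint]
  · congr 1
    ext C
    simp only [Set.mem_toFinset, Finset.mem_union, Finset.mem_biUnion, Set.mem_ofPred_eq]
    simp only [injCovers, Set.mem_ofPred_eq, Set.injOn_insert ha', Set.mem_image]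
    grind
  · rw [Finset.disjoint_biUnion_right]
    intro j hj
    simp only [Finset.disjoint_left, Set.mem_toFinset, Set.mem_ofPred_eq]
    simp only [injCovers, Set.mem_ofPred_eq, Set.injOn_insert ha', Set.mem_image]
    grind
  · intro j hj j' hj' hjj'
    simp only [Function.onFun, Finset.disjoint_left, Set.mem_toFinset, Set.mem_ofPred_eq]
    exact fun C ⟨⟨_, hC⟩, h⟩ ⟨_, h'⟩ => hjj' (hC hj hj' (h.symm.trans h'))

end Covers

section Collisions

variable {V α ι : Type*} {G : SimpleGraph V} [DecidableEq ι] {j a : ι}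
  {F : ι → SimpleGraph α} {S : Set ι} {W : SimpleGraph α} {C : ι → G.Subgraph}

lemma isCover_mergeIndex_iff (hja : j ≠ a) :
    (IsCover (mergeIndex F j a W) (mergeIndex C j a (C j ⊔ C a)) ∧
      Nonempty (F j ≃g (C j).coe) ∧ Nonempty (F a ≃g (C a).coe)) ↔
    IsCover F C ∧ Nonempty (W ≃g (C j ⊔ C a).coe) := by
  unfold IsCover
  rw [iSup_mergeIndex hja]
  constructor
  · rintro ⟨⟨hiso, hsup⟩, hj, ha⟩
    have hW := hiso ⟨j, hja⟩
    rw [mergeIndex_self, mergeIndex_self] at hW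
    refine ⟨⟨fun i => ?_, hsup⟩, hW⟩
    by_cases hia : i = a
    · exact hia ▸ ha
    by_cases hij : i = j
    · exact hij ▸ hj
    · have hi := hiso ⟨i, hia⟩
      rwa [mergeIndex_apply_of_ne hij, mergeIndex_apply_of_ne hij] at hi
  · rintro ⟨⟨hiso, hsup⟩, hW⟩
    refine ⟨⟨fun i => ?_, hsup⟩, hiso j, hiso a⟩
    by_cases hij : i.1 = j
    · rwa [mergeIndex_apply_of_eq hij, mergeIndex_apply_of_eq hij]
    · rw [mergeIndex_apply_of_ne hij, mergeIndex_apply_of_ne hij]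
      exact hiso i

lemma injOn_mergeIndex_iff (hv : (C a).verts = (C j).verts) (ha : a ∉ S) :
    (Subtype.val ⁻¹' S).InjOn (fun i => (mergeIndex C j a (C j ⊔ C a) i).verts) ↔
      S.InjOn fun i => (C i).verts := by
  have hverts : (fun i => (mergeIndex C j a (C j ⊔ C a) i).verts) =
      (fun i => (C i).verts) ∘ Subtype.val := by
    funext i
    unfold mergeIndex
    split_ifs with hij
    · rw [Function.comp_apply, Subgraph.verts_sup, hv, Set.union_self, hij]
    · rfl
  rw [hverts, Set.injOn_subtype_val.comp_iff, Set.image_preimage_eq_of_subset]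
  rw [Subtype.range_coe_subtype]
  exact fun i hi (hia : i = a) => ha (hia ▸ hi)

lemma mergeIndex_mem_injCovers_iff (hja : j ≠ a) (ha : a ∉ S)
    (hv : (C a).verts = (C j).verts) :
    (mergeIndex C j a (C j ⊔ C a) ∈ injCovers (mergeIndex F j a W) (Subtype.val ⁻¹' S) G ∧
      Nonempty (F j ≃g (C j).coe) ∧ Nonempty (F a ≃g (C a).coe)) ↔
    C ∈ injCovers F S G ∧ Nonempty (W ≃g (C j ⊔ C a).coe) := by
  simp only [injCovers, Set.mem_ofPred_eq, injOn_mergeIndex_iff hv ha]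
  have := isCover_mergeIndex_iff (F := F) (W := W) (C := C) hja
  tauto

variable (F S) in
/-- A cover whose members at `j` and `a` share their vertex set amounts to the cover obtained by
merging these two members, together with a splitting of the merged member. -/
def collisionEquiv (hja : j ≠ a) (ha : a ∉ S) (W : SimpleGraph α) (G : SimpleGraph V) :
    {C ∈ injCovers F S G | (C a).verts = (C j).verts ∧ Nonempty (W ≃g (C j ⊔ C a).coe)} ≃
      Σ D : injCovers (mergeIndex F j a W) (Subtype.val ⁻¹' S) G,
        (D.1 ⟨j, hja⟩).splittings (F j) (F a) where
  toFun C :=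
    have h := (mergeIndex_mem_injCovers_iff hja ha C.2.2.1).mpr ⟨C.2.1, C.2.2.2⟩
    ⟨⟨_, h.1⟩, ⟨(C.1 j, C.1 a), (mergeIndex_self hja _ _).symm, C.2.2.1.symm, h.2⟩⟩
  invFun D := ⟨unmergeIndex D.1.1 j D.2.1.1 D.2.1.2, by
    obtain ⟨⟨D, hD⟩, ⟨A, B⟩, hAB, hv, hA, hB⟩ := D
    set C := unmergeIndex D j A B
    have hCj : C j = A := unmergeIndex_apply_left hja D A B
    have hCa : C a = B := unmergeIndex_apply_right D A B
    have hv' : (C a).verts = (C j).verts := by rw [hCj, hCa, hv]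
    have hD' : mergeIndex C j a (C j ⊔ C a) = D := by
      rw [hCj, hCa, hAB]
      exact mergeIndex_unmergeIndex hja D A B
    have h := (mergeIndex_mem_injCovers_iff hja ha hv').mp ⟨hD' ▸ hD, hCj ▸ hA, hCa ▸ hB⟩
    exact ⟨h.1, hv', h.2⟩⟩
  left_inv C := Subtype.ext (unmergeIndex_mergeIndex hja C.1 _)
  right_inv := by
    rintro ⟨⟨D, hD⟩, ⟨A, B⟩, hAB, hv, hA, hB⟩
    have hCj := unmergeIndex_apply_left hja D A B
    have hCa := unmergeIndex_apply_right (j := j) D A B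
    refine Sigma.subtype_ext (Subtype.ext ?_) ?_
    · dsimp only
      rw [hCj, hCa, hAB]
      exact mergeIndex_unmergeIndex hja D A B
    · dsimp only
      rw [hCj, hCa]

lemma card_collisions_iso [Finite V] [Finite ι] (hja : j ≠ a) (ha : a ∉ S) (W : SimpleGraph α)
    (G : SimpleGraph V) :
    Nat.card {C ∈ injCovers F S G | (C a).verts = (C j).verts ∧ Nonempty (W ≃g (C j ⊔ C a).coe)} =
      Nat.card ((⊤ : W.Subgraph).splittings (F j) (F a)) *
        Nat.card (injCovers (mergeIndex F j a W) (Subtype.val ⁻¹' S) G) := by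
  have := Fintype.ofFinite (injCovers (mergeIndex F j a W) (Subtype.val ⁻¹' S) G)
  have hfiber (D : injCovers (mergeIndex F j a W) (Subtype.val ⁻¹' S) G) :
      Nat.card ((D.1 ⟨j, hja⟩).splittings (F j) (F a)) =
        Nat.card ((⊤ : W.Subgraph).splittings (F j) (F a)) := by
    have hW := D.2.1.1 ⟨j, hja⟩
    rw [mergeIndex_self] at hW
    exact Subgraph.card_splittings_eq _ hW.some _ _
  rw [Nat.card_congr (collisionEquiv F S hja ha W G), Nat.card_sigma]
  simp only [hfiber, Finset.sum_const, Finset.card_univ, smul_eq_mul, Nat.card_eq_fintype_card,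
    mul_comm]

def isoSetoid (α : Type*) : Setoid (SimpleGraph α) where
  r A B := Nonempty (A ≃g B)
  iseqv := ⟨fun _ => ⟨.refl⟩, fun ⟨e⟩ => ⟨e.symm⟩, fun ⟨e⟩ ⟨f⟩ => ⟨e.trans f⟩⟩

omit [DecidableEq ι] in
lemma card_eq_sum_card_iso [Fintype (Quotient (isoSetoid α))] {T : Type*} [Finite T]
    (H : T → G.Subgraph) (hH : ∀ x, Nonempty (α ≃ (H x).verts)) :
    Nat.card T = ∑ c : Quotient (isoSetoid α), Nat.card {x // Nonempty (c.out ≃g (H x).coe)} := by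
  choose W e using fun x => (⟨_, ⟨Iso.comap (hH x).some (H x).coe⟩⟩ :
    ∃ W : SimpleGraph α, Nonempty (W ≃g (H x).coe))
  rw [← Nat.card_congr (Equiv.sigmaFiberEquiv fun x => (⟦W x⟧ : Quotient (isoSetoid α))),
    Nat.card_sigma]
  refine Finset.sum_congr rfl fun c _ => Nat.card_congr (Equiv.subtypeEquivRight fun x => ?_)
  rw [Quotient.mk_eq_iff_out]
  exact ⟨fun ⟨f⟩ => ⟨f.symm.trans (e x).some⟩, fun ⟨f⟩ => ⟨(e x).some.trans f.symm⟩⟩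

lemma card_collisions [Finite V] [Finite ι] [Fintype (Quotient (isoSetoid α))] (hja : j ≠ a)
    (ha : a ∉ S) (G : SimpleGraph V) :
    Nat.card {C ∈ injCovers F S G | (C a).verts = (C j).verts} =
      ∑ c : Quotient (isoSetoid α), Nat.card ((⊤ : c.out.Subgraph).splittings (F j) (F a)) *
        Nat.card (injCovers (mergeIndex F j a c.out) (Subtype.val ⁻¹' S) G) := by
  have hverts (C : {C ∈ injCovers F S G | (C a).verts = (C j).verts}) :
      Nonempty (α ≃ (C.1 j ⊔ C.1 a).verts) := by
    obtain ⟨⟨⟨hiso, -⟩, -⟩, hv⟩ := C.2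
    rw [Subgraph.verts_sup, hv, Set.union_self]
    exact ⟨(hiso j).some.toEquiv⟩
  rw [card_eq_sum_card_iso _ hverts]
  refine Finset.sum_congr rfl fun c _ => ?_
  rw [← card_collisions_iso hja ha]
  exact Nat.card_congr ⟨fun C => ⟨C.1.1, C.1.2.1, C.1.2.2, C.2⟩,
    fun C => ⟨⟨C.1, C.2.1, C.2.2.1⟩, C.2.2.2⟩, fun _ => rfl, fun _ => rfl⟩

lemma card_injCovers_insert [Finite V] [Fintype ι] [Fintype (Quotient (isoSetoid α))]
    {S : Finset ι} (ha : a ∉ S) (G : SimpleGraph V) :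
    (Nat.card (injCovers F (insert a S) G) : ℝ) = Nat.card (injCovers F S G) -
      ∑ j ∈ S, ∑ c : Quotient (isoSetoid α),
        (Nat.card ((⊤ : c.out.Subgraph).splittings (F j) (F a)) : ℝ) *
          Nat.card (injCovers (mergeIndex F j a c.out) (Subtype.val ⁻¹' S) G) := by
  rw [card_injCovers_eq_add_sum F ha G, Nat.cast_add, Nat.cast_sum, eq_sub_iff_add_eq,
    add_right_inj]
  refine Finset.sum_congr rfl fun j hj => ?_
  rw [card_collisions (fun h : j = a => ha (h ▸ hj)) ha G]
  push_cast
  rfl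

end Collisions

end SimpleGraph

open SimpleGraph

def GSeq.toFamily {k : ℕ} (L : GSeq) (hL : ∀ X ∈ L, X.1 = k) :
    Fin L.length → SimpleGraph (Fin k) :=
  fun i => (L.get i).2.map (finCongr (hL _ (L.get_mem i)))

lemma GSeq.nonempty_iso_get_iff {k : ℕ} (L : GSeq) (hL : ∀ X ∈ L, X.1 = k) (i : Fin L.length)
    {β : Type*} (X : SimpleGraph β) :
    Nonempty ((L.get i).2 ≃g X) ↔ Nonempty (L.toFamily hL i ≃g X) :=
  ⟨fun ⟨e⟩ => ⟨(Iso.map _ _).symm.trans e⟩, fun ⟨e⟩ => ⟨(Iso.map _ _).trans e⟩⟩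

lemma coverCount_eq_card_injCovers {n k : ℕ} (L : GSeq) (hL : ∀ X ∈ L, X.1 = k)
    (G : SimpleGraph (Fin n)) : coverCount L G = Nat.card (injCovers (L.toFamily hL) ∅ G) :=
  Nat.card_congr (Equiv.subtypeEquivRight fun C => by
    simp only [injCovers, IsCover, Set.mem_ofPred_eq, Set.injOn_empty, and_true,
      GSeq.nonempty_iso_get_iff L hL])

lemma coverCountNO_eq_card_injCovers {n k : ℕ} (L : GSeq) (hL : ∀ X ∈ L, X.1 = k)
    (G : SimpleGraph (Fin n)) :
    coverCountNO L G = Nat.card (injCovers (L.toFamily hL) Set.univ G) :=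
  Nat.card_congr (Equiv.subtypeEquivRight fun C => by
    simp only [injCovers, IsCover, Set.mem_ofPred_eq, Set.injOn_univ, and_assoc,
      GSeq.nonempty_iso_get_iff L hL])

def coverSpan (n k : ℕ) : Submodule ℝ (SimpleGraph (Fin n) → ℝ) :=
  Submodule.span ℝ ((fun L G => (coverCount L G : ℝ)) '' {L : GSeq | ∀ X ∈ L, X.1 = k})

lemma card_injCovers_empty_mem_coverSpan {n k : ℕ} {ι : Type*} [Fintype ι]
    (F : ι → SimpleGraph (Fin k)) :
    (fun G : SimpleGraph (Fin n) => (Nat.card (injCovers F ∅ G) : ℝ)) ∈ coverSpan n k := by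
  let e := (Fintype.equivFin ι).symm
  let L : GSeq := List.ofFn fun i => ⟨k, F (e i)⟩
  have hL : ∀ X ∈ L, X.1 = k := by simp [L, List.mem_ofFn]
  refine Submodule.subset_span ⟨L, hL, funext fun G => ?_⟩
  show (coverCount L G : ℝ) = _
  rw [coverCount_eq_card_injCovers L hL,
    card_injCovers_empty_congr ((finCongr List.length_ofFn).trans e) fun i => ?_]
  rw [← GSeq.nonempty_iso_get_iff, List.get_ofFn]
  exact ⟨.refl⟩

theorem card_injCovers_mem_coverSpan {n k : ℕ} {ι : Type} [Fintype ι] [DecidableEq ι]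
    (F : ι → SimpleGraph (Fin k)) (S : Finset ι) :
    (fun G : SimpleGraph (Fin n) => (Nat.card (injCovers F S G) : ℝ)) ∈ coverSpan n k := by
  induction hN : Fintype.card ι using Nat.strong_induction_on generalizing ι with
  | _ N ih =>
  have := Fintype.ofFinite (Quotient (isoSetoid (Fin k)))
  induction S using Finset.induction_on with
  | empty => simpa using card_injCovers_empty_mem_coverSpan F
  | insert a S ha hS =>
    have hrec : (fun G : SimpleGraph (Fin n) => (Nat.card (injCovers F ↑(insert a S) G) : ℝ)) =
        (fun G => (Nat.card (injCovers F S G) : ℝ)) -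
          ∑ j ∈ S, ∑ c : Quotient (isoSetoid (Fin k)),
            (Nat.card ((⊤ : c.out.Subgraph).splittings (F j) (F a)) : ℝ) •
              fun G => (Nat.card (injCovers (mergeIndex F j a c.out) (Subtype.val ⁻¹' S) G) : ℝ) := by
      funext G
      simp only [Pi.sub_apply, Finset.sum_apply, Pi.smul_apply, smul_eq_mul]
      rw [Finset.coe_insert]
      exact card_injCovers_insert ha G
    rw [hrec]
    refine sub_mem hS (sum_mem fun j _ => sum_mem fun c _ => Submodule.smul_mem _ _ ?_)
    have hcard : Fintype.card {i // i ≠ a} < N := hN ▸ Fintype.card_subtype_lt fun h => h rfl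
    have hS' : Subtype.val ⁻¹' (S : Set ι) = (S.subtype (· ≠ a) : Set {i // i ≠ a}) := by
      ext; simp
    rw [hS']
    exact ih _ hcard _ _ rfl

theorem stmt_16_general {n : ℕ} (L : GSeq) (hL : ∀ F ∈ L, F.1 = n - 1) :
    ∃ (S : Finset GSeq) (β : GSeq → ℝ),
      (∀ L' ∈ S, ∀ F ∈ L', F.1 = n - 1) ∧
      ∀ G : SimpleGraph (Fin n),
        (coverCountNO L G : ℝ) = ∑ L' ∈ S, β L' * coverCount L' G := by
  have hmem : (fun G : SimpleGraph (Fin n) => (coverCountNO L G : ℝ)) ∈ coverSpan n (n - 1) := by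
    simpa only [coverCountNO_eq_card_injCovers L hL, Finset.coe_univ] using
      card_injCovers_mem_coverSpan (L.toFamily hL) Finset.univ
  obtain ⟨l, hl, hsum⟩ := (Finsupp.mem_span_image_iff_linearCombination ℝ).mp hmem
  refine ⟨l.support, l, fun L' hL' => hl hL', fun G => ?_⟩
  rw [← congrFun hsum G, Finsupp.linearCombination_apply, Finsupp.sum, Finset.sum_apply]
  simp

/-- Let `n ≥ 2` and let `L = (F_1, …, F_ℓ)` be a sequence of graphs, each with
exactly `n − 1` vertices. Then there are a finite set `S` of sequences of graphs
on exactly `n − 1` vertices and real coefficients `β` such that for every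
`n`-vertex graph `G`, `c*(L, G) = Σ_{L' ∈ S} β(L') · c(L', G)`: the
non-overlapping covering number is a fixed real linear combination of ordinary
covering numbers. -/
theorem stmt_16 {n : ℕ} (hn : 2 ≤ n) (L : GSeq) (hL : ∀ F ∈ L, F.1 = n - 1) :
    ∃ (S : Finset GSeq) (β : GSeq → ℝ),
      (∀ L' ∈ S, ∀ F ∈ L', F.1 = n - 1) ∧
      ∀ G : SimpleGraph (Fin n),
        (coverCountNO L G : ℝ) = ∑ L' ∈ S, β L' * coverCount L' G :=
  stmt_16_general L hL
end
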